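/- S(n) = 0, and for every i with 1 ≤ i ≤ n−1, node i+1 is a descendant of node S(i) in PH(T), i.e., h_{S(i)} is a prefix of h_{i+1}. -/

import Mathlib

/-- `heapHList T i = [h_0, h_1, …, h_i]`: `h_0 = ε` and `h_i` is the shortest
prefix of `T[i:]` (the suffix of `T` starting at 1-indexed position `i`) not
among `h_0, …, h_{i-1}` (falling back to `T[i:]` itself if every prefix
already occurs there). -/
def heapHList {α : Type*} [DecidableEq α] (T : List α) : ℕ → List (List α)
  | 0 => [[]]
  | i + 1 =>
    let prev := heapHList T i
    let suf := T.drop i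
    prev ++ [(((List.range (suf.length + 1)).find?
        (fun k => decide (suf.take k ∉ prev))).elim suf fun k => suf.take k)]

/-- `heapH T i = h_i`. -/
def heapH {α : Type*} [DecidableEq α] (T : List α) (i : ℕ) : List α :=
  (heapHList T i).getD i []

/-- `T` ends with a letter that occurs nowhere else in `T`
(1-indexed: `T[i] ≠ T[n]` for all `1 ≤ i ≤ n - 1`). -/
def EndsUnique {α : Type*} (T : List α) : Prop :=
  ∀ i, i + 1 < T.length → T[i]? ≠ T[T.length - 1]?

section Aux

variable {α : Type*} [DecidableEq α]

private lemma range_find?_min :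
    ∀ (n : ℕ) (p : ℕ → Bool) (k : ℕ), (List.range n).find? p = some k →
      ∀ j < k, p j = false := by
  intro n
  induction n with
  | zero => intro p k h j hj; simp at h
  | succ m ih =>
    intro p k h j hj
    rw [List.range_succ_eq_map] at h
    by_cases h0 : p 0
    · rw [List.find?_cons_of_pos h0] at h
      simp at h; omega
    · rw [List.find?_cons_of_neg h0, List.find?_map] at h
      obtain ⟨k', hk', hkk⟩ := Option.map_eq_some_iff.1 h
      rcases j with _ | j
      · simpa using h0
      · exact ih _ k' hk' j (by omega)

private lemma length_heapHList (T : List α) (i : ℕ) :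
    (heapHList T i).length = i + 1 := by
  induction i with
  | zero => rfl
  | succ m ih => simp [heapHList, ih]

private lemma heapH_succ (T : List α) (i : ℕ) :
    heapH T (i + 1) = ((List.range ((T.drop i).length + 1)).find?
        (fun k => decide ((T.drop i).take k ∉ heapHList T i))).elim
        (T.drop i) (fun k => (T.drop i).take k) := by
  show (heapHList T i ++ [_]).getD (i + 1) [] = _
  rw [List.getD,
    List.getElem?_append_right (by rw [length_heapHList]), length_heapHList]
  simp

private lemma heapHList_succ (T : List α) (i : ℕ) :
    heapHList T (i + 1) = heapHList T i ++ [heapH T (i + 1)] := by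
  rw [heapH_succ]; rfl

private lemma heapH_zero (T : List α) : heapH T 0 = [] := rfl

private lemma mem_heapHList_iff {T : List α} {i : ℕ} {u : List α} :
    u ∈ heapHList T i ↔ ∃ j, j ≤ i ∧ heapH T j = u := by
  induction i with
  | zero =>
    constructor
    · intro h; simp only [heapHList, List.mem_singleton] at h
      exact ⟨0, le_rfl, h.symm⟩
    · rintro ⟨j, hj, rfl⟩
      interval_cases j
      simp [heapH_zero, heapHList]
  | succ m ih =>
    rw [heapHList_succ, List.mem_append, List.mem_singleton, ih]
    constructor
    · rintro (⟨j, hj, rfl⟩ | rfl)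
      · exact ⟨j, by omega, rfl⟩
      · exact ⟨m + 1, le_rfl, rfl⟩
    · rintro ⟨j, hj, rfl⟩
      rcases Nat.lt_or_ge j (m + 1) with h | h
      · exact Or.inl ⟨j, by omega, rfl⟩
      · right; have : j = m + 1 := by omega
        rw [this]

private lemma nil_mem_heapHList (T : List α) (i : ℕ) : [] ∈ heapHList T i :=
  mem_heapHList_iff.2 ⟨0, Nat.zero_le _, heapH_zero T⟩

private lemma heapH_prefix (T : List α) (i : ℕ) :
    heapH T (i + 1) <+: T.drop i := by
  rw [heapH_succ]
  cases h : (List.range ((T.drop i).length + 1)).find?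
      (fun k => decide ((T.drop i).take k ∉ heapHList T i)) with
  | none => simp
  | some k => simpa using List.take_prefix k (T.drop i)

private lemma prefix_getElem? {l₁ l₂ : List α} (h : l₁ <+: l₂) {i : ℕ}
    (hi : i < l₁.length) : l₂[i]? = l₁[i]? := by
  obtain ⟨r, rfl⟩ := h
  rw [List.getElem?_append_left hi]

/-- Under `EndsUnique`, the full suffix `T.drop j` (for `j < |T|`) never
occurs among `h_0, …, h_j`. -/
private lemma suffix_not_mem {T : List α} (hu : EndsUnique T) {j : ℕ}
    (hj : j < T.length) : T.drop j ∉ heapHList T j := by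
  intro hmem
  obtain ⟨m, hm, hEq⟩ := mem_heapHList_iff.1 hmem
  rcases m with _ | m'
  · rw [heapH_zero] at hEq
    have : (T.drop j).length = 0 := by rw [← hEq]; rfl
    rw [List.length_drop] at this; omega
  · have hpre : T.drop j <+: T.drop m' := by rw [← hEq]; exact heapH_prefix T m'
    have hm' : m' < j := by omega
    have hlen : T.length - j - 1 < (T.drop j).length := by
      rw [List.length_drop]; omega
    have e1 : (T.drop j)[T.length - j - 1]? = T[T.length - 1]? := by
      rw [List.getElem?_drop]
      congr 1; omega
    have e2 : (T.drop m')[T.length - j - 1]? = T[m' + (T.length - j - 1)]? := by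
      rw [List.getElem?_drop]
    have e3 := prefix_getElem? hpre hlen
    have := hu (m' + (T.length - j - 1)) (by omega)
    rw [e2, e1] at e3
    exact this e3

/-- The main structural facts about `h_{j+1}` for `j + 1 ≤ |T|`:
it is a prefix of `T[j+1:]`, it is not among `h_0, …, h_j`, and every
strictly shorter prefix of `T[j+1:]` is among `h_0, …, h_j`. -/
private lemma heapH_step {T : List α} (hu : EndsUnique T) {j : ℕ}
    (hj : j < T.length) :
    heapH T (j + 1) <+: T.drop j ∧ heapH T (j + 1) ∉ heapHList T j ∧
      ∀ u, u <+: T.drop j → u.length < (heapH T (j + 1)).length →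
        u ∈ heapHList T j := by
  have hns := suffix_not_mem hu hj
  set p : ℕ → Bool := fun k => decide ((T.drop j).take k ∉ heapHList T j) with hp
  have hsome : ((List.range ((T.drop j).length + 1)).find? p).isSome := by
    rw [List.find?_isSome]
    refine ⟨(T.drop j).length, by simp, ?_⟩
    simp only [hp, List.take_length, decide_eq_true_eq]
    exact hns
  obtain ⟨k, hk⟩ := Option.isSome_iff_exists.mp hsome
  have hpk : p k = true := List.find?_some hk
  have hkmem : k ∈ List.range ((T.drop j).length + 1) := List.mem_of_find?_eq_some hk
  have hkle : k ≤ (T.drop j).length := by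
    rw [List.mem_range] at hkmem; omega
  have hmin := range_find?_min _ _ _ hk
  have hH : heapH T (j + 1) = (T.drop j).take k := by
    rw [heapH_succ, ← hp, hk]; rfl
  have hHlen : (heapH T (j + 1)).length = k := by
    rw [hH, List.length_take]; omega
  refine ⟨by rw [hH]; exact List.take_prefix k (T.drop j), ?_, ?_⟩
  · rw [hH]; simpa [hp] using hpk
  · intro u hu' hlen
    rw [hHlen] at hlen
    have hulen : u.length ≤ (T.drop j).length := hu'.length_le
    have hueq : u = (T.drop j).take u.length := by
      rw [List.prefix_iff_eq_take] at hu'; exact hu'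
    have := hmin u.length hlen
    simp only [hp, decide_eq_false_iff_not, not_not] at this
    rw [hueq]; exact this

private lemma heapH_ne_nil {T : List α} (hu : EndsUnique T) {j : ℕ}
    (hj : j < T.length) : heapH T (j + 1) ≠ [] := by
  intro h
  have := (heapH_step hu hj).2.1
  rw [h] at this
  exact this (nil_mem_heapHList T j)

/-- Key descent lemma: the tail of `h_{j+1}` equals some `h_k` with
`k ≤ j + 2`. -/
private lemma tail_heapH_mem {T : List α} (hu : EndsUnique T) :
    ∀ j, j + 1 < T.length →
      ∃ k, k ≤ j + 2 ∧ heapH T k = (heapH T (j + 1)).tail := by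
  intro j
  induction j using Nat.strong_induction_on with
  | _ j ih =>
    intro hj
    obtain ⟨hpre, hnmem, hmin⟩ := heapH_step hu (by omega : j < T.length)
    have hdrop : T.drop j = T[j] :: T.drop (j + 1) :=
      List.drop_eq_getElem_cons (by omega)
    have hne := heapH_ne_nil hu (by omega : j < T.length)
    obtain ⟨a, t, hat⟩ := List.exists_cons_of_ne_nil hne
    rw [hat, hdrop, List.cons_prefix_cons] at hpre
    obtain ⟨rfl, htpre⟩ := hpre
    rw [hat]; simp only [List.tail_cons]
    by_cases htmem : t ∈ heapHList T (j + 1)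
    · obtain ⟨k, hk, hkeq⟩ := mem_heapHList_iff.1 htmem
      exact ⟨k, by omega, hkeq⟩
    · obtain ⟨hpre', hnmem', hmin'⟩ := heapH_step hu (hj : j + 1 < T.length)
      have hle : (heapH T (j + 1 + 1)).length ≤ t.length := by
        by_contra hlt
        exact htmem (hmin' t htpre (by omega))
      have hpp : heapH T (j + 1 + 1) <+: t :=
        List.prefix_of_prefix_length_le hpre' htpre hle
      rcases eq_or_lt_of_le hle with heq | hlt
      · exact ⟨j + 1 + 1, by omega, hpp.eq_of_length heq⟩
      · exfalso
        have hwpre : T[j] :: heapH T (j + 1 + 1) <+: T.drop j := by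
          rw [hdrop, List.cons_prefix_cons]
          exact ⟨rfl, hpp.trans htpre⟩
        have hwlen : (T[j] :: heapH T (j + 1 + 1)).length <
            (heapH T (j + 1)).length := by
          rw [hat]; simpa using hlt
        have hwmem := hmin _ hwpre hwlen
        obtain ⟨m, hm, hmeq⟩ := mem_heapHList_iff.1 hwmem
        rcases m with _ | m'
        · rw [heapH_zero] at hmeq; exact absurd hmeq (List.cons_ne_nil _ _).symm
        · have hm' : m' < j := by omega
          obtain ⟨k, hk, hkeq⟩ := ih m' hm' (by omega)
          rw [hmeq] at hkeq
          simp only [List.tail_cons] at hkeq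
          exact hnmem' (mem_heapHList_iff.2 ⟨k, by omega, hkeq⟩)

end Aux

/-- `S(n) = 0`, and for every `1 ≤ i ≤ n - 1`, node `i + 1`
is a descendant of node `S(i)`, i.e. `h_{S(i)}` is a prefix of `h_{i+1}`.
Here `S` is any suffix-link map, i.e. `S i ∈ {0, …, n}` and
`h_i = c · h_{S(i)}` for some letter `c`, for all `1 ≤ i ≤ n`. -/
theorem statement6 {α : Type*} [DecidableEq α] (T : List α) (n : ℕ)
    (hn : n = T.length) (hpos : 1 ≤ n) (hu : EndsUnique T)
    (S : ℕ → ℕ)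
    (hS : ∀ i, 1 ≤ i → i ≤ n →
      S i ≤ n ∧ ∃ c : α, heapH T i = c :: heapH T (S i)) :
    S n = 0 ∧
    ∀ i, 1 ≤ i → i ≤ n - 1 → heapH T (S i) <+: heapH T (i + 1) := by
  constructor
  · -- S n = 0
    obtain ⟨hSle, c, hc⟩ := hS n hpos le_rfl
    have hn1 : n - 1 < T.length := by omega
    have hpre : heapH T n <+: T.drop (n - 1) := by
      have := heapH_prefix T (n - 1)
      rwa [show n - 1 + 1 = n by omega] at this
    have hlen1 : (T.drop (n - 1)).length = 1 := by
      rw [List.length_drop]; omega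
    have hlen : (heapH T n).length ≤ 1 := by
      have := hpre.length_le; omega
    rw [hc] at hlen
    simp only [List.length_cons] at hlen
    have hSnil : heapH T (S n) = [] := by
      have : (heapH T (S n)).length = 0 := by omega
      exact List.length_eq_zero_iff.1 this
    by_contra hS0
    obtain ⟨s, hs⟩ : ∃ s, S n = s + 1 := ⟨S n - 1, by omega⟩
    rw [hs] at hSnil
    exact heapH_ne_nil hu (by omega : s < T.length) hSnil
  · -- descendant property
    intro i h1 h2
    obtain ⟨j, rfl⟩ : ∃ j, i = j + 1 := ⟨i - 1, by omega⟩
    have hjn : j + 1 < T.length := by omega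
    obtain ⟨hSle, c, hc⟩ := hS (j + 1) (by omega) (by omega)
    obtain ⟨k, hk, hkeq⟩ := tail_heapH_mem hu j hjn
    rw [hc] at hkeq
    simp only [List.tail_cons] at hkeq
    have hSk : heapH T (S (j + 1)) = heapH T k := hkeq.symm
    rw [hSk]
    rcases eq_or_lt_of_le hk with heq | hlt
    · rw [heq]
    · -- k ≤ j + 1
      have hkj : k ≤ j + 1 := by omega
      obtain ⟨hpre', hnmem', hmin'⟩ := heapH_step hu hjn
      -- heapH T k <+: T.drop (j + 1)
      have hdrop : T.drop j = T[j] :: T.drop (j + 1) :=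
        List.drop_eq_getElem_cons (by omega)
      have hpre : heapH T (j + 1) <+: T.drop j :=
        (heapH_step hu (by omega : j < T.length)).1
      rw [hc, hdrop, List.cons_prefix_cons] at hpre
      have hkpre : heapH T k <+: T.drop (j + 1) := by
        rw [hSk] at hpre; exact hpre.2
      rcases le_or_gt (heapH T k).length (heapH T (j + 1 + 1)).length
          with hle | hgt
      · exact List.prefix_of_prefix_length_le hkpre hpre' hle
      · exfalso
        rcases k with _ | k'
        · rw [heapH_zero] at hgt; simp at hgt
        · have hk' : k' < T.length := by omega
          obtain ⟨hpk, hnk, hmk⟩ := heapH_step hu hk'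
          have : heapH T (j + 1 + 1) <+: T.drop k' :=
            (List.prefix_of_prefix_length_le hpre' hkpre (by omega)).trans hpk
          have hmem := hmk _ this hgt
          obtain ⟨m, hm, hmeq⟩ := mem_heapHList_iff.1 hmem
          exact hnmem' (mem_heapHList_iff.2 ⟨m, by omega, hmeq⟩)
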